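/- arXiv:2010.05519 — 2 statements merged into one kernel-verified Lean document; each statement's English description precedes it below -/
import Mathlib

section
/- For any 0 ≤ c < 1, any sorted vector v = (v_1 ≥ … ≥ v_N) of nonnegative reals, and I = {1,…,m}: the infimum over b_I ∈ ℝ≥0^m of ERM^c(b_I, v_{-I}) is attained, and it is attained by a vector of m identical bids; moreover, letting b* be the minimizing common bid, b* = ERM^c(b*,…,b*, v_{-I}) = min over b_I ∈ ℝ≥0^m of ERM^c(b_I, v_{-I}). -/
open MeasureTheory ProbabilityTheory Filter

noncomputable section

noncomputable def sortedVal {N : ℕ} (v : Fin N → ℝ) (i : ℕ) : ℝ :=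
  (Multiset.sort (↑(List.ofFn v)) (· ≤ ·)).getD (N - i) 0

noncomputable def argmaxIdx (S : Finset ℕ) (f : ℕ → ℝ) : ℕ :=
  WithBot.unbotD 0 ((S.filter fun i => ∀ j ∈ S, f j ≤ f i).max)

noncomputable def ERMIdx (c : ℝ) {N : ℕ} (v : Fin N → ℝ) : ℕ :=
  argmaxIdx ((Finset.Icc 1 N).filter fun i => c * N < (i : ℝ))
    (fun i => (i : ℝ) * sortedVal v i)

noncomputable def ERM (c : ℝ) {N : ℕ} (v : Fin N → ℝ) : ℝ :=
  sortedVal v (ERMIdx c v)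

/-- Incentive-awareness measure `δ_I(v_I, v_{-I})` of a price function `P`,
where the coordinates in `I` are the manipulable ones and `v` records both
`v_I` (on `I`) and `v_{-I}` (off `I`). -/
noncomputable def deltaIdx {N : ℕ} (P : (Fin N → ℝ) → ℝ) (I : Finset (Fin N))
    (v : Fin N → ℝ) : ℝ :=
  1 - sInf {p : ℝ | ∃ b : Fin N → ℝ, (∀ j, 0 ≤ b j) ∧
      p = P fun j => if j ∈ I then b j else v j} / P v

/-- Worst-case incentive-awareness measure `δ_m^worst(v_{-I})`
(only the coordinates of `v` off `I` matter). -/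
noncomputable def deltaWorstIdx {N : ℕ} (P : (Fin N → ℝ) → ℝ) (I : Finset (Fin N))
    (v : Fin N → ℝ) : ℝ :=
  sSup {x : ℝ | ∃ u : Fin N → ℝ, (∀ j, 0 ≤ u j) ∧
      x = deltaIdx P I fun j => if j ∈ I then u j else v j}

/-- `Δ_{N,m}^worst` with explicit index set `I`:
expectation of `δ^worst(v_{-I})` over i.i.d. samples from `μ`. -/
noncomputable def DeltaWorstIdx {N : ℕ} (μ : Measure ℝ) (P : (Fin N → ℝ) → ℝ)
    (I : Finset (Fin N)) : ℝ :=
  ∫ v : Fin N → ℝ, deltaWorstIdx P I v ∂(Measure.pi fun _ => μ)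

/-- The index set `{0, …, m-1}` inside `Fin N`. -/
noncomputable def firstIdx (N m : ℕ) : Finset (Fin N) :=
  Finset.univ.filter fun j => (j : ℕ) < m

/-- The worst-case incentive-awareness measure `Δ_{N,m}^worst`. -/
noncomputable def DeltaWorst {N : ℕ} (μ : Measure ℝ) (P : (Fin N → ℝ) → ℝ) (m : ℕ) : ℝ :=
  DeltaWorstIdx μ P (firstIdx N m)

/-- Append-based incentive-awareness measure `δ_I(v_I, v_{-I})` for `P = ERM^c`. -/
noncomputable def deltaIA (c : ℝ) {m n : ℕ} (vI : Fin m → ℝ) (w : Fin n → ℝ) : ℝ :=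
  1 - sInf {p : ℝ | ∃ b : Fin m → ℝ, (∀ i, 0 ≤ b i) ∧ p = ERM c (Fin.append b w)} /
      ERM c (Fin.append vI w)

/-- Append-based worst-case incentive-awareness measure `δ_m^worst(v_{-I})` for `P = ERM^c`. -/
noncomputable def deltaWorstA (c : ℝ) (m : ℕ) {n : ℕ} (w : Fin n → ℝ) : ℝ :=
  sSup {x : ℝ | ∃ vI : Fin m → ℝ, (∀ i, 0 ≤ vI i) ∧ x = deltaIA c vI w}

/-- The index `k* = argmax_{i > cN} i·v_i` selected by `ERM^c` when the top `m`
of the `N` samples are fixed to `+∞` and the remaining `N - m` samples are `w`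
(so `v_i` for `i > m` is the `(i-m)`-th largest entry of `w`);
ties are broken towards the larger index. -/
noncomputable def kStarInf (c : ℝ) (N m : ℕ) {n : ℕ} (w : Fin n → ℝ) : ℕ :=
  argmaxIdx ((Finset.Icc (m + 1) N).filter fun i => c * N < (i : ℝ))
    (fun i => (i : ℝ) * sortedVal w (i - m))

/-- Interim utility `u^K(v, p)` of a bidder with value `v` in a second price
auction with reserve price `p` among `K` i.i.d. bidders from `μ`. -/
noncomputable def uK (μ : Measure ℝ) (K : ℕ) (v p : ℝ) : ℝ :=
  ∫ x : Fin (K - 1) → ℝ, max (v - (List.ofFn x).foldr max p) 0 ∂(Measure.pi fun _ => μ)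

/-- A distribution on `[0, ∞)` has monotone hazard rate (MHR) if it has a density `f`
whose hazard rate `f v / (1 - F v)` is non-decreasing on its support. -/
def IsMHR (μ : Measure ℝ) : Prop :=
  ∃ f : ℝ → ℝ, (∀ x, 0 ≤ f x) ∧ (∀ x, x < 0 → f x = 0) ∧
    μ = MeasureTheory.volume.withDensity (fun x => ENNReal.ofReal (f x)) ∧
    MonotoneOn (fun v => f v / (1 - ProbabilityTheory.cdf μ v)) (Function.support f)

/-- `α`-strong regularity: a density `f`, positive on an interval support contained
in `[0, ∞)`, whose virtual value `φ(x) = x - (1 - F x)/f x` satisfies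
`φ(y) - φ(x) ≥ α (y - x)` whenever `x < y` on the support. -/
def IsAlphaStronglyRegular (α : ℝ) (μ : Measure ℝ) : Prop :=
  ∃ f : ℝ → ℝ, (∀ x, 0 ≤ f x) ∧
    μ = MeasureTheory.volume.withDensity (fun x => ENNReal.ofReal (f x)) ∧
    Set.OrdConnected (Function.support f) ∧
    (∀ x ∈ Function.support f, 0 ≤ x) ∧
    (∀ x ∈ Function.support f, ∀ y ∈ Function.support f, x < y →
      α * (y - x) ≤
        (y - (1 - ProbabilityTheory.cdf μ y) / f y) -
          (x - (1 - ProbabilityTheory.cdf μ x) / f x))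

end

/-!
Replacing the manipulated bids by `m` copies of the price `p` they produce never raises the
price: every entry of the new sample that is strictly above `p` comes from `w`, and comparing
revenues `i · v_i` in the two samples shows that the old winning index is still optimal.
Hence every achievable price lies in `{b | ERM^c(b, …, b, w) ≤ b}`. This set is closed because
`ERM^c` is lower semicontinuous: near a sample, the winning index can only move down, since
ties are broken towards the larger index, i.e. the lower price. So the infimum `α` of the
achievable prices satisfies `ERM^c(α, …, α, w) ≤ α`, and equality holds because the left side
is itself an achievable price.
-/

open Topology

theorem List.le_getElem_iff_length_sub_le_countP {α : Type*} [LinearOrder α] {l : List α}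
    (hl : l.Pairwise (· ≤ ·)) {k : ℕ} (hk : k < l.length) {x : α} :
    x ≤ l[k] ↔ l.length - k ≤ l.countP (x ≤ ·) := by
  have hsplit (i : ℕ) :
      l.countP (x ≤ ·) = (l.take i).countP (x ≤ ·) + (l.drop i).countP (x ≤ ·) := by
    rw [← List.countP_append, List.take_append_drop]
  constructor
  · intro hx
    have hdrop : (l.drop k).countP (x ≤ ·) = (l.drop k).length := by
      refine List.countP_eq_length.2 fun y hy => ?_
      obtain ⟨j, hj, rfl⟩ := List.getElem_of_mem hy
      rw [List.getElem_drop]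
      simpa using hx.trans
        (hl.rel_get_of_le (a := ⟨k, hk⟩) (b := ⟨k + j, by simp at hj; omega⟩) (by simp))
    rw [hsplit k, hdrop, List.length_drop]
    omega
  · intro h
    by_contra! hx
    have htake : (l.take (k + 1)).countP (x ≤ ·) = 0 := by
      refine List.countP_eq_zero.2 fun y hy => ?_
      obtain ⟨j, hj, rfl⟩ := List.getElem_of_mem hy
      simp only [List.length_take] at hj
      rw [List.getElem_take]
      simpa using
        (hl.rel_get_of_le (a := ⟨j, by omega⟩) (b := ⟨k, hk⟩) (by simp; omega)).trans_lt hx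
    have hdrop := (l.drop (k + 1)).countP_le_length (p := (x ≤ ·))
    rw [hsplit (k + 1), htake] at h
    rw [List.length_drop] at hdrop
    omega

noncomputable def countGe {N : ℕ} (v : Fin N → ℝ) (x : ℝ) : ℕ :=
  (Finset.univ.filter fun j => x ≤ v j).card

section CountGe

variable {m n N : ℕ}

theorem countGe_mono {u v : Fin N → ℝ} {x y : ℝ} (h : ∀ k, x ≤ u k → y ≤ v k) :
    countGe u x ≤ countGe v y :=
  Finset.card_le_card (Finset.monotone_filter_right _ fun k _ => h k)

theorem countGe_le (v : Fin N → ℝ) (x : ℝ) : countGe v x ≤ N :=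
  (Finset.card_filter_le _ _).trans_eq (Finset.card_fin N)

theorem countGe_append (u : Fin m → ℝ) (w : Fin n → ℝ) (x : ℝ) :
    countGe (Fin.append u w) x = countGe u x + countGe w x := by
  simp only [countGe, Finset.card_filter, Fin.sum_univ_add, Fin.append_left, Fin.append_right]

theorem countGe_const (b x : ℝ) : countGe (fun _ : Fin m => b) x = if x ≤ b then m else 0 := by
  split_ifs with h <;> simp [countGe, h]

end CountGe

section SortedVal

variable {N : ℕ} (v : Fin N → ℝ)

theorem length_sort_ofFn :
    (Multiset.sort (↑(List.ofFn v) : Multiset ℝ) (· ≤ ·)).length = N := by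
  rw [Multiset.length_sort, Multiset.coe_card, List.length_ofFn]

theorem countP_sort_ofFn (x : ℝ) :
    (Multiset.sort (↑(List.ofFn v) : Multiset ℝ) (· ≤ ·)).countP (x ≤ ·) =
      countGe v x := by
  rw [← Multiset.coe_countP, Multiset.sort_eq, ← Fin.univ_val_map, Multiset.countP_map,
    countGe, Finset.card_def, Finset.filter_val]

variable {v} {i j : ℕ}

theorem le_sortedVal_iff (h1 : 1 ≤ i) (h2 : i ≤ N) {x : ℝ} :
    x ≤ sortedVal v i ↔ i ≤ countGe v x := by
  have hlen := length_sort_ofFn v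
  rw [sortedVal, List.getD_eq_getElem _ _ (by omega),
    List.le_getElem_iff_length_sub_le_countP (Multiset.pairwise_sort _ _), countP_sort_ofFn, hlen,
    Nat.sub_sub_self h2]

theorem le_countGe_sortedVal (h1 : 1 ≤ i) (h2 : i ≤ N) : i ≤ countGe v (sortedVal v i) :=
  (le_sortedVal_iff h1 h2).1 le_rfl

theorem sortedVal_le_sortedVal (h1 : 1 ≤ i) (hij : i ≤ j) (h2 : j ≤ N) :
    sortedVal v j ≤ sortedVal v i :=
  (le_sortedVal_iff h1 (hij.trans h2)).2 (hij.trans (le_countGe_sortedVal (h1.trans hij) h2))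

theorem lipschitzWith_sortedVal (h1 : 1 ≤ i) (h2 : i ≤ N) :
    LipschitzWith 1 fun v : Fin N → ℝ => sortedVal v i := by
  refine LipschitzWith.of_le_add fun u v => ?_
  rw [← sub_le_iff_le_add, le_sortedVal_iff h1 h2]
  refine (le_countGe_sortedVal (v := u) h1 h2).trans (countGe_mono fun k hk => ?_)
  have := (Real.dist_eq _ _ ▸ dist_le_pi_dist u v k : |u k - v k| ≤ dist u v)
  linarith [le_abs_self (u k - v k)]

end SortedVal

theorem argmaxIdx_isGreatest {S : Finset ℕ} (hS : S.Nonempty) (f : ℕ → ℝ) :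
    IsGreatest {i | i ∈ S ∧ ∀ j ∈ S, f j ≤ f i} (argmaxIdx S f) := by
  obtain ⟨a, ha, hmax⟩ := S.exists_max_image f hS
  have hT : (S.filter fun i => ∀ j ∈ S, f j ≤ f i).Nonempty :=
    ⟨a, Finset.mem_filter.2 ⟨ha, hmax⟩⟩
  rw [argmaxIdx, ← Finset.coe_max' hT, WithBot.unbotD_coe, ← Finset.coe_filter]
  exact Finset.isGreatest_max' _ hT

noncomputable def guardedIdx (c : ℝ) (N : ℕ) : Finset ℕ :=
  (Finset.Icc 1 N).filter fun i => c * N < (i : ℝ)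

theorem mem_guardedIdx {c : ℝ} {N i : ℕ} :
    i ∈ guardedIdx c N ↔ (1 ≤ i ∧ i ≤ N) ∧ c * N < i := by
  rw [guardedIdx, Finset.mem_filter, Finset.mem_Icc]

section ERM

variable {c : ℝ} {N : ℕ}

theorem ERMIdx_isGreatest (hG : (guardedIdx c N).Nonempty) (v : Fin N → ℝ) :
    IsGreatest
      {i | i ∈ guardedIdx c N ∧
        ∀ j ∈ guardedIdx c N, j * sortedVal v j ≤ i * sortedVal v i}
      (ERMIdx c v) :=
  argmaxIdx_isGreatest hG _

theorem ERM_eq_zero_of_guardedIdx_eq_empty (hG : guardedIdx c N = ∅) (v : Fin N → ℝ) :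
    ERM c v = 0 := by
  have hidx : ERMIdx c v = 0 := by
    rw [ERMIdx, ← guardedIdx, hG]
    rfl
  rw [ERM, hidx, sortedVal, Nat.sub_zero, List.getD_eq_default _ _ (length_sort_ofFn v).le]

theorem ERM_nonneg (hG : (guardedIdx c N).Nonempty) {v : Fin N → ℝ} (hv : ∀ k, 0 ≤ v k) :
    0 ≤ ERM c v := by
  obtain ⟨⟨h1, h2⟩, -⟩ := mem_guardedIdx.1 (ERMIdx_isGreatest hG v).1.1
  refine (le_sortedVal_iff h1 h2).2 (h2.trans_eq ?_)
  simp [countGe, hv]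

theorem lowerSemicontinuous_ERM (hG : (guardedIdx c N).Nonempty) :
    LowerSemicontinuous (ERM c : (Fin N → ℝ) → ℝ) := by
  intro v y hy
  obtain ⟨⟨hk, hkmax⟩, hkgreatest⟩ := ERMIdx_isGreatest hG v
  set k := ERMIdx c v
  obtain ⟨⟨hk1, hkN⟩, -⟩ := mem_guardedIdx.1 hk
  have hcont {i : ℕ} (hi : i ∈ guardedIdx c N) :
      Continuous fun u => (i : ℝ) * sortedVal u i :=
    have hbounds := (mem_guardedIdx.1 hi).1
    continuous_const.mul (lipschitzWith_sortedVal hbounds.1 hbounds.2).continuous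
  have hstrict : ∀ j ∈ guardedIdx c N, k < j →
      (j : ℝ) * sortedVal v j < k * sortedVal v k :=
    fun j hj hkj => not_le.1 fun h =>
      hkj.not_ge (hkgreatest ⟨hj, fun i hi => (hkmax i hi).trans h⟩)
  have hnear : ∀ᶠ u in 𝓝 v, ∀ j ∈ guardedIdx c N, k < j →
      (j : ℝ) * sortedVal u j < k * sortedVal u k :=
    (Finset.eventually_all _).2 fun j hj => Filter.eventually_imp_distrib_left.2 fun hkj =>
      (hcont hj).continuousAt.eventually_lt (hcont hk).continuousAt (hstrict j hj hkj)
  have hval : ∀ᶠ u in 𝓝 v, y < sortedVal u k :=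
    continuousAt_const.eventually_lt (lipschitzWith_sortedVal hk1 hkN).continuous.continuousAt hy
  filter_upwards [hnear, hval] with u hu hyu
  obtain ⟨⟨hl, hlmax⟩, -⟩ := ERMIdx_isGreatest hG u
  obtain ⟨⟨hl1, -⟩, -⟩ := mem_guardedIdx.1 hl
  have hlk : ERMIdx c u ≤ k := not_lt.1 fun h => (hu _ hl h).not_ge (hlmax k hk)
  exact hyu.trans_le (sortedVal_le_sortedVal hl1 hlk hkN)

end ERM

section Append

variable {m n : ℕ}

theorem append_nonneg {u : Fin m → ℝ} {w : Fin n → ℝ} (hu : ∀ i, 0 ≤ u i)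
    (hw : ∀ j, 0 ≤ w j) (k : Fin (m + n)) : 0 ≤ Fin.append u w k :=
  Fin.addCases (fun i => by simpa using hu i) (fun j => by simpa using hw j) k

theorem ERM_append_const_ERM_le {c : ℝ} (hG : (guardedIdx c (m + n)).Nonempty)
    {b : Fin m → ℝ} {w : Fin n → ℝ} (hb : ∀ i, 0 ≤ b i) (hw : ∀ j, 0 ≤ w j) :
    ERM c (Fin.append (fun _ : Fin m => ERM c (Fin.append b w)) w) ≤ ERM c (Fin.append b w) := by
  set v := Fin.append b w
  set p := ERM c v
  set v' := Fin.append (fun _ : Fin m => p) w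
  obtain ⟨⟨hi, himax⟩, -⟩ := ERMIdx_isGreatest hG v
  obtain ⟨⟨hi', hi'max⟩, hi'greatest⟩ := ERMIdx_isGreatest hG v'
  set i := ERMIdx c v
  set i' := ERMIdx c v'
  obtain ⟨⟨hi1, hiN⟩, -⟩ := mem_guardedIdx.1 hi
  obtain ⟨⟨hi'1, hi'N⟩, -⟩ := mem_guardedIdx.1 hi'
  set p' := ERM c v'
  by_contra! hpp'
  have hp : 0 ≤ p := ERM_nonneg hG (append_nonneg hb hw)
  have hcount : i ≤ countGe v p := le_countGe_sortedVal hi1 hiN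
  have hcount' : i' ≤ countGe v' p' := le_countGe_sortedVal hi'1 hi'N
  rw [countGe_append] at hcount
  rw [countGe_append, countGe_const, if_neg hpp'.not_ge] at hcount'
  -- the top `i'` entries of `v'` exceed `p`, so they come from `w` and also lie in `v`
  have hv'v : p' ≤ sortedVal v i' := by
    rw [le_sortedVal_iff hi'1 hi'N, countGe_append]
    omega
  have hvv' : p ≤ sortedVal v' i := by
    have := countGe_le b p
    rw [le_sortedVal_iff hi1 hiN, countGe_append, countGe_const, if_pos le_rfl]
    omega
  have hrev : (i' : ℝ) * p' ≤ i * p := by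
    calc (i' : ℝ) * p' ≤ i' * sortedVal v i' := by gcongr
      _ ≤ i * p := himax i' hi'
  have hrev' : (i : ℝ) * p ≤ i * sortedVal v' i := by gcongr
  have hii' : i ≤ i' :=
    hi'greatest ⟨hi, fun j hj => (hi'max j hj).trans (hrev.trans hrev')⟩
  have hi1' : (1 : ℝ) ≤ i := by exact_mod_cast hi1
  have hii'' : (i : ℝ) ≤ i' := by exact_mod_cast hii'
  nlinarith

end Append

theorem ERM_min_attained_constant_bid_general (m n : ℕ) (c : ℝ)
    (w : Fin n → ℝ) (hw : ∀ j, 0 ≤ w j) :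
    ∃ bstar : ℝ, 0 ≤ bstar ∧
      ERM c (Fin.append (fun _ : Fin m => bstar) w) = bstar ∧
      ∀ bI : Fin m → ℝ, (∀ i, 0 ≤ bI i) →
        ERM c (Fin.append (fun _ : Fin m => bstar) w) ≤ ERM c (Fin.append bI w) := by
  rcases (guardedIdx c (m + n)).eq_empty_or_nonempty with hG | hG
  · simp only [ERM_eq_zero_of_guardedIdx_eq_empty hG]
    exact ⟨0, le_rfl, rfl, fun _ _ => le_rfl⟩
  set P := {p | ∃ bI : Fin m → ℝ, (∀ i, 0 ≤ bI i) ∧ ERM c (Fin.append bI w) = p}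
  have hP0 : ∀ p ∈ P, 0 ≤ p := by
    rintro _ ⟨bI, hbI, rfl⟩
    exact ERM_nonneg hG (append_nonneg hbI hw)
  have hPne : P.Nonempty := ⟨_, 0, fun _ => le_rfl, rfl⟩
  set α := sInf P
  have hα0 : 0 ≤ α := le_csInf hPne hP0
  have hαP : ∀ p ∈ P, α ≤ p := fun p hp => csInf_le ⟨0, hP0⟩ hp
  have hclosed : IsClosed {b : ℝ | ERM c (Fin.append (fun _ : Fin m => b) w) ≤ b} :=
    (lowerSemicontinuous_ERM hG).isClosed_epigraph.preimage
      (f := fun b : ℝ => (Fin.append (fun _ : Fin m => b) w, b)) (by fun_prop)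
  have hPsub : P ⊆ {b : ℝ | ERM c (Fin.append (fun _ : Fin m => b) w) ≤ b} := by
    rintro _ ⟨bI, hbI, rfl⟩
    exact ERM_append_const_ERM_le hG hbI hw
  have hfix : ERM c (Fin.append (fun _ : Fin m => α) w) = α :=
    le_antisymm (closure_minimal hPsub hclosed (csInf_mem_closure hPne ⟨0, hP0⟩))
      (hαP _ ⟨_, fun _ => hα0, rfl⟩)
  exact ⟨α, hα0, hfix, fun bI hbI => hfix.trans_le (hαP _ ⟨bI, hbI, rfl⟩)⟩

/-- Claim 3 in the paper. For any `0 ≤ c < 1` and any nonnegative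
vector `w = v_{-I}` of the untouched samples, the infimum over `bI ∈ ℝ≥0^m` of
`ERM^c(bI, w)` is attained, and is attained by a vector of `m` identical bids `b*`;
moreover `b* = ERM^c(b*, …, b*, w) = min_{bI} ERM^c(bI, w)`. -/
theorem ERM_min_attained_constant_bid (m n : ℕ) (c : ℝ) (hc0 : 0 ≤ c) (hc1 : c < 1)
    (w : Fin n → ℝ) (hw : ∀ j, 0 ≤ w j) :
    ∃ bstar : ℝ, 0 ≤ bstar ∧
      ERM c (Fin.append (fun _ : Fin m => bstar) w) = bstar ∧
      ∀ bI : Fin m → ℝ, (∀ i, 0 ≤ bI i) →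
        ERM c (Fin.append (fun _ : Fin m => bstar) w) ≤ ERM c (Fin.append bI w) :=
  ERM_min_attained_constant_bid_general m n c w hw
end

section
/- Let 0 < d < 1, let N, m be integers with m/N ≤ c ≤ d/2, and suppose 2m/(dN) < η < 1. Choose thresholds η_0 = η/2, η_1 = η, η_2 = 2η, arbitrary η_2 < η_3 < … < η_M < 1, and η_{M+1} = 1, and set θ_0 = 1 and θ_t = η/(2η_{t+1}) for t = 1,…,M. Let v̄_I ∈ ℝ≥0^m consist of m values all at least max v_{-I}, sort all N samples non-increasingly as v_1 ≥ … ≥ v_N, and let k* = argmax over i with cN < i ≤ N of i·v_i. If δ_I(v̄_I, v_{-I}) > η and k* > dN, then there exist an index j ≥ k* and t ∈ {0,…,M} such that (1−η_{t+1})·v_{k*} ≤ v_j ≤ (1−η_t)·v_{k*} and k*·v_{k*} ≥ j·v_j ≥ k*·v_{k*} − (m/θ_t)·v_{k*}. -/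
/-!
Let `k` be the index chosen by `ERM^c` on the sample whose top `m` values are `vbar`, and
`V = v_k`. If `δ > η`, some report `b` of the top `m` bidders lowers the price below `(1 - η) V`,
at an index `k'`. Replacing the top `m` values shifts each order statistic of the remaining
sample by at most `m` positions, so `(k - m) V ≤ k' v'_{k'} ≤ k' v_{k'} ≤ k V`. Because
`η k > 2m`, this forces `k < k'` and `v_{k'} ≤ (1 - η/2) V`; the threshold `t` is then the
last `η_t` with `v_{k'} ≤ (1 - η_t) V`, and `θ_t ≤ 1` turns `(k - m) V ≤ k' v_{k'}` into the
revenue bound.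
-/

open MeasureTheory ProbabilityTheory Filter

open Finset

theorem List.le_getElem_iff_le_countP {α : Type*} [LinearOrder α] {l : List α}
    (hl : l.Pairwise (· ≤ ·)) {q : ℕ} (hq : q < l.length) (a : α) :
    a ≤ l[q] ↔ l.length - q ≤ l.countP (fun x => a ≤ x) := by
  have hcount : l.countP (fun x => a ≤ x) =
      (l.take q).countP (fun x => a ≤ x) + (l.drop q).countP (fun x => a ≤ x) := by
    rw [← List.countP_append, List.take_append_drop]
  have hdrop_eq : l.drop q = l[q] :: l.drop (q + 1) := List.drop_eq_getElem_cons hq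
  have hhead : ∀ x ∈ l.drop (q + 1), l[q] ≤ x := by
    have := hl.drop (i := q)
    rw [hdrop_eq, List.pairwise_cons] at this
    exact this.1
  constructor
  · intro ha
    have hdrop : (l.drop q).countP (fun x => a ≤ x) = l.length - q := by
      rw [List.countP_eq_length.2, List.length_drop]
      rw [hdrop_eq]
      simp only [List.mem_cons, decide_eq_true_eq]
      rintro x (rfl | hx)
      exacts [ha, ha.trans (hhead x hx)]
    omega
  · intro hle
    by_contra! ha
    have htake : (l.take q).countP (fun x => a ≤ x) = 0 := by
      refine List.countP_eq_zero.2 fun x hx => ?_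
      have := hl.rel_of_mem_take_of_mem_drop hx (hdrop_eq ▸ List.mem_cons_self)
      simpa using this.trans_lt ha
    have hdrop : (l.drop q).countP (fun x => a ≤ x) < l.length - q := by
      rw [hdrop_eq, List.countP_cons_of_neg (by simpa using ha)]
      have := List.countP_le_length (p := fun x => a ≤ x) (l := l.drop (q + 1))
      rw [List.length_drop] at this
      omega
    omega

section SortedVal

variable {m n : ℕ}

theorem le_sortedVal_iff_s10 {N : ℕ} (v : Fin N → ℝ) {i : ℕ} (hi : 1 ≤ i) (hiN : i ≤ N) (a : ℝ) :
    a ≤ sortedVal v i ↔ i ≤ (List.ofFn v).countP (fun x => a ≤ x) := by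
  unfold sortedVal
  set l := Multiset.sort (↑(List.ofFn v) : Multiset ℝ) (· ≤ ·)
  have hlen : l.length = N := by simp [l]
  have hperm : l.Perm (List.ofFn v) := Multiset.coe_eq_coe.1 (Multiset.sort_eq _ _)
  rw [List.getD_eq_getElem _ _ (by omega),
    List.le_getElem_iff_le_countP (Multiset.pairwise_sort _ _), hperm.countP_eq, hlen]
  omega

theorem sortedVal_nonneg {N : ℕ} {v : Fin N → ℝ} (hv : ∀ j, 0 ≤ v j) {i : ℕ} (hi : 1 ≤ i)
    (hiN : i ≤ N) : 0 ≤ sortedVal v i := by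
  rw [le_sortedVal_iff_s10 v hi hiN, List.countP_eq_length.2 (by simpa using hv)]
  simpa using hiN

theorem sortedVal_le_sortedVal_append (a : Fin m → ℝ) (b : Fin n → ℝ) {i : ℕ} (hi : 1 ≤ i)
    (hin : i ≤ n) : sortedVal b i ≤ sortedVal (Fin.append a b) i := by
  rw [le_sortedVal_iff_s10 _ hi (by omega), List.ofFn_fin_append, List.countP_append]
  have := (le_sortedVal_iff_s10 b hi hin _).1 le_rfl
  omega

theorem sortedVal_append_le (a : Fin m → ℝ) (b : Fin n → ℝ) {i : ℕ} (hmi : m < i)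
    (hi : i ≤ m + n) : sortedVal (Fin.append a b) i ≤ sortedVal b (i - m) := by
  have h := (le_sortedVal_iff_s10 (Fin.append a b) (by omega) hi _).1 le_rfl
  rw [List.ofFn_fin_append, List.countP_append] at h
  have ha := List.countP_le_length (p := fun x => sortedVal (Fin.append a b) i ≤ x)
    (l := List.ofFn a)
  rw [List.length_ofFn] at ha
  exact (le_sortedVal_iff_s10 b (by omega) (by omega) _).2 (by omega)

theorem sortedVal_append_of_le {a : Fin m → ℝ} {b : Fin n → ℝ} (hab : ∀ i j, b j ≤ a i)
    {i : ℕ} (hmi : m < i) (hi : i ≤ m + n) :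
    sortedVal (Fin.append a b) i = sortedVal b (i - m) := by
  refine (sortedVal_append_le a b hmi hi).antisymm ?_
  set x := sortedVal b (i - m)
  have hb := (le_sortedVal_iff_s10 b (by omega) (by omega) x).1 le_rfl
  obtain ⟨_, hy, hxy⟩ :=
    List.countP_pos_iff.1 (show 0 < (List.ofFn b).countP (fun y => x ≤ y) by omega)
  obtain ⟨j, rfl⟩ := List.mem_ofFn.1 hy
  have ha : (List.ofFn a).countP (fun y => x ≤ y) = m := by
    rw [List.countP_eq_length.2, List.length_ofFn]
    simp only [List.mem_ofFn, decide_eq_true_eq]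
    rintro _ ⟨k, rfl⟩
    exact (of_decide_eq_true hxy).trans (hab k j)
  rw [le_sortedVal_iff_s10 _ (by omega) hi, List.ofFn_fin_append, List.countP_append, ha]
  omega

end SortedVal

section ERM

theorem argmaxIdx_mem_filter {S : Finset ℕ} (f : ℕ → ℝ) (hS : S.Nonempty) :
    argmaxIdx S f ∈ S.filter fun i => ∀ j ∈ S, f j ≤ f i := by
  obtain ⟨b, hb, hmax⟩ := S.exists_max_image f hS
  have hF : (S.filter fun i => ∀ j ∈ S, f j ≤ f i).Nonempty := ⟨b, mem_filter.2 ⟨hb, hmax⟩⟩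
  rw [argmaxIdx, ← coe_max' hF, WithBot.unbotD_coe]
  exact max'_mem _ hF

theorem le_argmaxIdx {S : Finset ℕ} (f : ℕ → ℝ) {j : ℕ} (hj : j ∈ S) :
    f j ≤ f (argmaxIdx S f) :=
  (mem_filter.1 (argmaxIdx_mem_filter f ⟨j, hj⟩)).2 j hj

noncomputable def ERMRange (c : ℝ) (N : ℕ) : Finset ℕ :=
  (Icc 1 N).filter fun i => c * N < (i : ℝ)

variable {c : ℝ} {N : ℕ}

theorem mem_ERMRange {i : ℕ} : i ∈ ERMRange c N ↔ 1 ≤ i ∧ i ≤ N ∧ c * N < i := by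
  simp [ERMRange, and_assoc]

theorem ERMIdx_mem_ERMRange (v : Fin N → ℝ) (h : (ERMRange c N).Nonempty) :
    ERMIdx c v ∈ ERMRange c N :=
  (mem_filter.1 (argmaxIdx_mem_filter _ h)).1

theorem nonempty_ERMRange_of_ERMIdx_ne_zero {v : Fin N → ℝ} (h : ERMIdx c v ≠ 0) :
    (ERMRange c N).Nonempty := by
  by_contra hS
  rw [not_nonempty_iff_eq_empty] at hS
  exact h (show argmaxIdx (ERMRange c N) _ = 0 by simp [hS, argmaxIdx])

theorem mul_sortedVal_le_ERMIdx (v : Fin N → ℝ) {i : ℕ} (hi : i ∈ ERMRange c N) :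
    (i : ℝ) * sortedVal v i ≤ ERMIdx c v * sortedVal v (ERMIdx c v) :=
  le_argmaxIdx (fun i => (i : ℝ) * sortedVal v i) hi

end ERM

theorem lt_and_le_of_profitable_deviation {k k' m η V p x : ℝ} (hη : 0 < η)
    (hη1 : η < 1) (hmk : 2 * m < η * k) (hV : 0 < V) (hk' : 0 < k')
    (hdev : (k - m) * V ≤ k' * p) (hp : p < (1 - η) * V)
    (hopt : k' * x ≤ k * V) :
    k < k' ∧ x ≤ (1 - η / 2) * V := by
  have hshift : k - m < (1 - η) * k' := by
    refine lt_of_mul_lt_mul_right ?_ hV.le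
    calc (k - m) * V ≤ k' * p := hdev
      _ < k' * ((1 - η) * V) := mul_lt_mul_of_pos_left hp hk'
      _ = (1 - η) * k' * V := by ring
  have hkk' : k < k' := by nlinarith
  refine ⟨hkk', ?_⟩
  by_contra! hx
  have : (1 - η / 2) * k' < k := by
    refine lt_of_mul_lt_mul_right ?_ hV.le
    calc (1 - η / 2) * k' * V = k' * ((1 - η / 2) * V) := by ring
      _ < k' * x := mul_lt_mul_of_pos_left hx hk'
      _ ≤ k * V := hopt
  nlinarith

section Deviation

variable {m n : ℕ} {c : ℝ} {a b : Fin m → ℝ} {w : Fin n → ℝ}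

theorem exists_ERM_append_lt_of_lt_deltaIA {η : ℝ} (hδ : η < deltaIA c a w)
    (hpos : 0 < ERM c (Fin.append a w)) :
    ∃ b : Fin m → ℝ, (∀ i, 0 ≤ b i) ∧
      ERM c (Fin.append b w) < (1 - η) * ERM c (Fin.append a w) := by
  set P := {p : ℝ | ∃ b : Fin m → ℝ, (∀ i, 0 ≤ b i) ∧ p = ERM c (Fin.append b w)}
  have hinf : sInf P < (1 - η) * ERM c (Fin.append a w) := by
    rw [← div_lt_iff₀ hpos]
    rw [deltaIA] at hδ
    linarith
  obtain ⟨_, ⟨b, hb, rfl⟩, hlt⟩ :=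
    exists_lt_of_csInf_lt (s := P) ⟨_, 0, fun _ => le_rfl, rfl⟩ hinf
  exact ⟨b, hb, hlt⟩

theorem sub_mul_sortedVal_append_le_ERM (b : Fin m → ℝ) (haw : ∀ i j, w j ≤ a i) {i : ℕ}
    (hmi : m < i) (hin : i ≤ m + n) (hci : c * (m + n) < (i : ℝ) - m) :
    ((i : ℝ) - m) * sortedVal (Fin.append a w) i ≤
      ERMIdx c (Fin.append b w) * ERM c (Fin.append b w) := by
  have hrange : i - m ∈ ERMRange c (m + n) := by
    rw [mem_ERMRange]
    push_cast [Nat.cast_sub hmi.le]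
    exact ⟨by omega, by omega, by linarith⟩
  -- `v_i` is the `(i - m)`-th largest value of `w`, and adding `b` to `w` can only raise it.
  calc ((i : ℝ) - m) * sortedVal (Fin.append a w) i
      = ((i - m : ℕ) : ℝ) * sortedVal w (i - m) := by
        rw [sortedVal_append_of_le haw hmi hin, Nat.cast_sub hmi.le]
    _ ≤ ((i - m : ℕ) : ℝ) * sortedVal (Fin.append b w) (i - m) := by
        gcongr
        exact sortedVal_le_sortedVal_append b w (by omega) (by omega)
    _ ≤ ERMIdx c (Fin.append b w) * ERM c (Fin.append b w) :=
        mul_sortedVal_le_ERMIdx _ hrange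

theorem ERM_append_le_sortedVal_append (b : Fin m → ℝ) (haw : ∀ i j, w j ≤ a i)
    (hmc : (m : ℝ) ≤ c * (m + n)) (hS : (ERMRange c (m + n)).Nonempty) :
    ERM c (Fin.append b w) ≤ sortedVal (Fin.append a w) (ERMIdx c (Fin.append b w)) := by
  obtain ⟨-, hkn, hck⟩ := mem_ERMRange.1 (ERMIdx_mem_ERMRange (Fin.append b w) hS)
  have hmk : m < ERMIdx c (Fin.append b w) := by
    push_cast at hck
    exact_mod_cast hmc.trans_lt hck
  rw [sortedVal_append_of_le haw hmk hkn]
  exact sortedVal_append_le b w hmk hkn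

theorem exists_lt_ERMIdx_of_lt_deltaIA {η : ℝ} (haw : ∀ i j, w j ≤ a i) (hη : 0 < η)
    (hη1 : η < 1) (hδ : η < deltaIA c a w) (hmc : (m : ℝ) ≤ c * (m + n))
    (hk : ERMIdx c (Fin.append a w) ∈ ERMRange c (m + n))
    (hck : c * (m + n) < (ERMIdx c (Fin.append a w) : ℝ) - m)
    (h2m : 2 * m < η * ERMIdx c (Fin.append a w)) (hV : 0 < ERM c (Fin.append a w)) :
    ∃ k' ∈ ERMRange c (m + n), ERMIdx c (Fin.append a w) < k' ∧
      sortedVal (Fin.append a w) k' ≤ (1 - η / 2) * ERM c (Fin.append a w) ∧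
      ((ERMIdx c (Fin.append a w) : ℝ) - m) * ERM c (Fin.append a w) ≤
        k' * sortedVal (Fin.append a w) k' := by
  obtain ⟨b, -, hb⟩ := exists_ERM_append_lt_of_lt_deltaIA hδ hV
  obtain ⟨-, hkN, -⟩ := mem_ERMRange.1 hk
  have hk' := ERMIdx_mem_ERMRange (Fin.append b w) ⟨_, hk⟩
  have hmk : m < ERMIdx c (Fin.append a w) := by
    exact_mod_cast (show (m : ℝ) < ERMIdx c (Fin.append a w) by linarith)
  have hdev := sub_mul_sortedVal_append_le_ERM b haw hmk hkN hck
  have hpx := ERM_append_le_sortedVal_append b haw hmc ⟨_, hk⟩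
  obtain ⟨hkk', hx⟩ := lt_and_le_of_profitable_deviation hη hη1 h2m hV
    (by exact_mod_cast (mem_ERMRange.1 hk').1) hdev hb (mul_sortedVal_le_ERMIdx _ hk')
  exact ⟨_, hk', by exact_mod_cast hkk', hx,
    hdev.trans (mul_le_mul_of_nonneg_left hpx (Nat.cast_nonneg _))⟩

end Deviation

theorem Nat.exists_le_bracket {P Q : ℕ → Prop} (hPQ : ∀ s, ¬ P s → Q s) (h0 : P 0) :
    ∀ {M : ℕ}, Q (M + 1) → ∃ t ≤ M, P t ∧ Q (t + 1)
  | 0, hQ => ⟨0, le_rfl, h0, hQ⟩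
  | M + 1, hQ => by
    by_cases hP : P (M + 1)
    · exact ⟨M + 1, le_rfl, hP, hQ⟩
    · obtain ⟨t, ht, hPt, hQt⟩ := Nat.exists_le_bracket hPQ h0 (hPQ _ hP)
      exact ⟨t, ht.trans M.le_succ, hPt, hQt⟩

section Thresholds

variable {η : ℝ} {M : ℕ} {ηs : ℕ → ℝ}

theorem le_threshold (hη : 0 ≤ η) (hη1 : η ≤ 1) (h2 : ηs 2 = 2 * η)
    (hmono : ∀ t, 2 ≤ t → t < M → ηs t < ηs (t + 1)) (htop : ηs (M + 1) = 1) {t : ℕ}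
    (ht : 2 ≤ t) (htM : t ≤ M + 1) : η ≤ ηs t := by
  have hmid : ∀ s, 2 ≤ s → s ≤ M → 2 * η ≤ ηs s := by
    intro s hs
    induction s, hs using Nat.le_induction with
    | base => exact fun _ => h2.ge
    | succ s hs ih => exact fun hsM => (ih (by omega)).trans (hmono s hs (by omega)).le
  rcases htM.lt_or_eq with htM | rfl
  · linarith [hmid t ht (by omega)]
  · rw [htop]; exact hη1

theorem le_div_weight {θ : ℕ → ℝ} (hη : 0 < η) (hη1 : η ≤ 1) (h2 : ηs 2 = 2 * η)
    (hmono : ∀ t, 2 ≤ t → t < M → ηs t < ηs (t + 1)) (htop : ηs (M + 1) = 1)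
    (hθ0 : θ 0 = 1) (hθ : ∀ t, 1 ≤ t → t ≤ M → θ t = η / (2 * ηs (t + 1)))
    {a : ℝ} (ha : 0 ≤ a) {t : ℕ} (htM : t ≤ M) : a ≤ a / θ t := by
  rcases Nat.eq_zero_or_pos t with rfl | ht
  · rw [hθ0, div_one]
  have hηt := le_threshold hη.le hη1 h2 hmono htop (t := t + 1) (by omega) (by omega)
  have hηs : 0 < ηs (t + 1) := hη.trans_le hηt
  rw [hθ t ht htM]
  exact le_div_self ha (by positivity) ((div_le_one (by positivity)).2 (by linarith))

end Thresholds

theorem bad_event_exists_general (d : ℝ) (hd0 : 0 < d)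
    (m n : ℕ) (c : ℝ) (hc : (m : ℝ) / (m + n) ≤ c) (hcd : c ≤ d / 2)
    (η : ℝ) (hη : 2 * m / (d * (m + n)) < η) (hη1 : η < 1)
    (M : ℕ) (ηs : ℕ → ℝ)
    (h0 : ηs 0 = η / 2) (h2 : ηs 2 = 2 * η)
    (hmono : ∀ t, 2 ≤ t → t < M → ηs t < ηs (t + 1))
    (htop : ηs (M + 1) = 1)
    (θ : ℕ → ℝ) (hθ0 : θ 0 = 1)
    (hθ : ∀ t, 1 ≤ t → t ≤ M → θ t = η / (2 * ηs (t + 1)))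
    (w : Fin n → ℝ) (hw : ∀ j, 0 ≤ w j)
    (vbar : Fin m → ℝ) (hvbar : ∀ i j, w j ≤ vbar i)
    (hdelta : η < deltaIA c vbar w)
    (hkstar : d * (m + n) < (ERMIdx c (Fin.append vbar w) : ℝ)) :
    ∃ j t : ℕ, ERMIdx c (Fin.append vbar w) ≤ j ∧ j ≤ m + n ∧ t ≤ M ∧
      (1 - ηs (t + 1)) * sortedVal (Fin.append vbar w) (ERMIdx c (Fin.append vbar w))
        ≤ sortedVal (Fin.append vbar w) j ∧
      sortedVal (Fin.append vbar w) j
        ≤ (1 - ηs t) * sortedVal (Fin.append vbar w) (ERMIdx c (Fin.append vbar w)) ∧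
      (j : ℝ) * sortedVal (Fin.append vbar w) j
        ≤ (ERMIdx c (Fin.append vbar w) : ℝ) *
            sortedVal (Fin.append vbar w) (ERMIdx c (Fin.append vbar w)) ∧
      (ERMIdx c (Fin.append vbar w) : ℝ) *
          sortedVal (Fin.append vbar w) (ERMIdx c (Fin.append vbar w))
        - ((m : ℝ) / θ t) *
            sortedVal (Fin.append vbar w) (ERMIdx c (Fin.append vbar w))
        ≤ (j : ℝ) * sortedVal (Fin.append vbar w) j := by
  set v := Fin.append vbar w
  set k := ERMIdx c v
  have hk0 : k ≠ 0 := fun h => by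
    rw [h, Nat.cast_zero] at hkstar
    exact hkstar.not_ge (by positivity)
  have hk := ERMIdx_mem_ERMRange v (nonempty_ERMRange_of_ERMIdx_ne_zero hk0)
  obtain ⟨hk1, hkN, -⟩ := mem_ERMRange.1 hk
  have hN : (0 : ℝ) < m + n := by exact_mod_cast hk1.trans hkN
  have hmc : (m : ℝ) ≤ c * (m + n) := (div_le_iff₀ hN).1 hc
  have hη0 : 0 < η := (div_nonneg (by positivity) (by positivity)).trans_lt hη
  have h2m : 2 * m < η * k := by nlinarith [(div_lt_iff₀ (by positivity)).1 hη]
  have hmk : m < k := by exact_mod_cast (show (m : ℝ) < k by nlinarith)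
  have hVw : sortedVal v k = sortedVal w (k - m) := sortedVal_append_of_le hvbar hmk hkN
  rcases (sortedVal_nonneg hw (by omega) (by omega)).eq_or_lt.imp (hVw ▸ ·) (hVw ▸ ·)
    with hV | hV
  · exact ⟨k, 0, le_rfl, hkN, Nat.zero_le _, by simp [← hV]⟩
  obtain ⟨k', hk', hkk', hx, hdev⟩ : ∃ k' ∈ ERMRange c (m + n), k < k' ∧
      sortedVal v k' ≤ (1 - η / 2) * sortedVal v k ∧
      ((k : ℝ) - m) * sortedVal v k ≤ k' * sortedVal v k' :=
    exists_lt_ERMIdx_of_lt_deltaIA hvbar hη0 hη1 hdelta hmc hk (by nlinarith) h2m hV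
  obtain ⟨-, hk'N, -⟩ := mem_ERMRange.1 hk'
  have hx0 : 0 ≤ sortedVal v k' := by
    rw [sortedVal_append_of_le hvbar (hmk.trans hkk') hk'N]
    exact sortedVal_nonneg hw (by omega) (by omega)
  obtain ⟨t, htM, hup, hlow⟩ := Nat.exists_le_bracket (M := M)
    (P := fun s => sortedVal v k' ≤ (1 - ηs s) * sortedVal v k)
    (Q := fun s => (1 - ηs s) * sortedVal v k ≤ sortedVal v k')
    (fun _ => le_of_not_ge) (by simpa [h0] using hx) (by simpa [htop] using hx0)
  refine ⟨k', t, hkk'.le, hk'N, htM, hlow, hup, mul_sortedVal_le_ERMIdx v hk', ?_⟩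
  have hθt := le_div_weight hη0 hη1.le h2 hmono htop hθ0 hθ (Nat.cast_nonneg m) htM
  nlinarith [mul_le_mul_of_nonneg_right hθt hV.le]

/-- Lemma on bad events; Lemma 7 in the paper. With `N = m + n`
samples, `m/N ≤ c ≤ d/2`, `2m/(dN) < η < 1`, thresholds `η_0 = η/2 < η_1 = η <
η_2 = 2η < η_3 < ⋯ < η_M < 1`, `η_{M+1} = 1`, and weights `θ_0 = 1`,
`θ_t = η/(2η_{t+1})` for `1 ≤ t ≤ M`: if `vbar` consists of `m` values at least
`max w`, `v` is the combined sorted sample vector, `k*` is the index selected by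
`ERM^c`, `δ_I(vbar, w) > η` and `k* > dN`, then there are `j ≥ k*` and `t ≤ M` with
`(1-η_{t+1})·v_{k*} ≤ v_j ≤ (1-η_t)·v_{k*}` and
`k*·v_{k*} ≥ j·v_j ≥ k*·v_{k*} − (m/θ_t)·v_{k*}`. -/
theorem bad_event_exists (d : ℝ) (hd0 : 0 < d) (hd1 : d < 1)
    (m n : ℕ) (c : ℝ) (hc : (m : ℝ) / (m + n) ≤ c) (hcd : c ≤ d / 2)
    (η : ℝ) (hη : 2 * m / (d * (m + n)) < η) (hη1 : η < 1)
    (M : ℕ) (hM : 2 ≤ M) (ηs : ℕ → ℝ)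
    (h0 : ηs 0 = η / 2) (h1 : ηs 1 = η) (h2 : ηs 2 = 2 * η)
    (hmono : ∀ t, 2 ≤ t → t < M → ηs t < ηs (t + 1))
    (hlast : ηs M < 1) (htop : ηs (M + 1) = 1)
    (θ : ℕ → ℝ) (hθ0 : θ 0 = 1)
    (hθ : ∀ t, 1 ≤ t → t ≤ M → θ t = η / (2 * ηs (t + 1)))
    (w : Fin n → ℝ) (hw : ∀ j, 0 ≤ w j)
    (vbar : Fin m → ℝ) (hvbar : ∀ i j, w j ≤ vbar i)
    (hdelta : η < deltaIA c vbar w)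
    (hkstar : d * (m + n) < (ERMIdx c (Fin.append vbar w) : ℝ)) :
    ∃ j t : ℕ, ERMIdx c (Fin.append vbar w) ≤ j ∧ j ≤ m + n ∧ t ≤ M ∧
      (1 - ηs (t + 1)) * sortedVal (Fin.append vbar w) (ERMIdx c (Fin.append vbar w))
        ≤ sortedVal (Fin.append vbar w) j ∧
      sortedVal (Fin.append vbar w) j
        ≤ (1 - ηs t) * sortedVal (Fin.append vbar w) (ERMIdx c (Fin.append vbar w)) ∧
      (j : ℝ) * sortedVal (Fin.append vbar w) j
        ≤ (ERMIdx c (Fin.append vbar w) : ℝ) *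
            sortedVal (Fin.append vbar w) (ERMIdx c (Fin.append vbar w)) ∧
      (ERMIdx c (Fin.append vbar w) : ℝ) *
          sortedVal (Fin.append vbar w) (ERMIdx c (Fin.append vbar w))
        - ((m : ℝ) / θ t) *
            sortedVal (Fin.append vbar w) (ERMIdx c (Fin.append vbar w))
        ≤ (j : ℝ) * sortedVal (Fin.append vbar w) j :=
  bad_event_exists_general d hd0 m n c hc hcd η hη hη1 M ηs h0 h2 hmono htop θ hθ0 hθ w hw vbar
    hvbar hdelta hkstar
end
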